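/- arXiv:2508.20249 — 5 statements merged into one kernel-verified Lean document; each statement's English description precedes it below -/
import Mathlib

section
/- Let u : ℝ₊^L → ℝ be concave and differentiable at c_t ∈ ℝ₊^L with ∇u(c_t) ≤ λρ componentwise (λ > 0, ρ ∈ ℝ₊₊^L), and suppose c_{t,j} = 0 for every coordinate j with ∇u(c_t)_j < λρ_j. Then for all c ∈ ℝ₊^L, u(c) ≤ u(c_t) + λ ρ'(c - c_t). -/
open Matrix

/-- Kuhn–Tucker conditions imply that `λρ` is a supergradient of the
concave function `u` at `ct`. -/
theorem stmt_1 (L : ℕ) (u : (Fin L → ℝ) → ℝ) (ρ ct : Fin L → ℝ) (lam : ℝ)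
    (hlam : 0 < lam) (hρ : ∀ i, 0 < ρ i) (hct : ∀ i, 0 ≤ ct i)
    (hconc : ConcaveOn ℝ {c : Fin L → ℝ | ∀ i, 0 ≤ c i} u)
    (D : (Fin L → ℝ) →L[ℝ] ℝ) (hderiv : HasFDerivAt u D ct)
    (hgrad : ∀ j, D (Pi.single j 1) ≤ lam * ρ j)
    (hslack : ∀ j, D (Pi.single j 1) < lam * ρ j → ct j = 0) :
    ∀ c : Fin L → ℝ, (∀ i, 0 ≤ c i) → u c ≤ u ct + lam * (ρ ⬝ᵥ (c - ct)) := by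
  intro c hc
  set v : Fin L → ℝ := c - ct with hv
  -- Step 1: supergradient property of D
  have hkey : u c - u ct ≤ D v := by
    have hline := (hderiv.hasLineDerivAt v).tendsto_slope_zero_right
    refine ge_of_tendsto hline ?_
    have h01 : Set.Ioc (0:ℝ) 1 ∈ nhdsWithin (0:ℝ) (Set.Ioi 0) := by
      refine mem_nhdsWithin.2 ⟨Set.Iio 1, isOpen_Iio, by norm_num, ?_⟩
      rintro t ⟨ht1, ht0⟩
      exact ⟨ht0, le_of_lt ht1⟩
    filter_upwards [h01] with t ht
    have ht0 : (0:ℝ) < t := ht.1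
    have ht1 : t ≤ 1 := ht.2
    have hmem : ct + t • v ∈ {c : Fin L → ℝ | ∀ i, 0 ≤ c i} := by
      intro i
      have : ct i + t * (c i - ct i) = (1 - t) * ct i + t * c i := by ring
      simp only [Pi.add_apply, Pi.smul_apply, hv, Pi.sub_apply, smul_eq_mul, this]
      exact add_nonneg (mul_nonneg (by linarith) (hct i)) (mul_nonneg ht0.le (hc i))
    have hcomb := hconc.2 hct hc (by linarith : (0:ℝ) ≤ 1 - t) (le_of_lt ht0)
      (by ring : (1 - t) + t = 1)
    have heq : (1 - t) • ct + t • c = ct + t • v := by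
      funext i; simp [hv]; ring
    rw [heq] at hcomb
    simp only [smul_eq_mul] at hcomb
    have : t * (u c - u ct) ≤ u (ct + t • v) - u ct := by nlinarith
    calc u c - u ct = t⁻¹ * (t * (u c - u ct)) := by field_simp
      _ ≤ t⁻¹ * (u (ct + t • v) - u ct) := by
          apply mul_le_mul_of_nonneg_left ‹t * (u c - u ct) ≤ u (ct + t • v) - u ct›
          positivity
      _ = t⁻¹ • (u (ct + t • v) - u ct) := by rw [smul_eq_mul]
  -- Step 2: D v ≤ lam * (ρ ⬝ᵥ v)
  have hDv : D v = ∑ j, v j * D (Pi.single j 1) := by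
    have : v = ∑ j, v j • (Pi.single j (1:ℝ) : Fin L → ℝ) := by
      funext i
      simp [Finset.sum_apply, Pi.single_apply, Finset.sum_ite_eq' Finset.univ i]
    calc D v = D (∑ j, v j • (Pi.single j (1:ℝ) : Fin L → ℝ)) := by rw [← this]
      _ = ∑ j, v j * D (Pi.single j 1) := by
          rw [map_sum]; simp [smul_eq_mul]
  have hDle : D v ≤ lam * (ρ ⬝ᵥ v) := by
    rw [hDv, dotProduct, Finset.mul_sum]
    apply Finset.sum_le_sum
    intro j _
    rcases lt_or_eq_of_le (hgrad j) with h | h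
    · have hctj : ct j = 0 := hslack j h
      have hvj : 0 ≤ v j := by simp [hv, hctj]; exact hc j
      calc v j * D (Pi.single j 1) ≤ v j * (lam * ρ j) :=
            mul_le_mul_of_nonneg_left (le_of_lt h) hvj
        _ = lam * (ρ j * v j) := by ring
    · rw [h]; exact le_of_eq (by ring)
  linarith
end

section
/- Let {(ρ_t, c_t)}_{t=0,...,T}, δ ∈ (0,1], e ∈ (0,1] be given with ρ_t ∈ ℝ₊₊^L, c_t ∈ ℝ₊^L, and suppose numbers u_0,...,u_T satisfy u_s ≤ u_t + δ^{-t} ρ_t'(c_s/e - c_t) for all s,t. Define u(c) as the infimum over all finite sequences τ = (t_1,...,t_m) of indices of δ^{-t_m} ρ_{t_m}'(c/e - c_{t_m}) + Σ_{i=1}^{m-1} δ^{-t_i} ρ_{t_i}'(c_{t_{i+1}}/e - c_{t_i}). Then u is a real-valued (finite), concave, and monotone (nondecreasing) function on ℝ₊^L. -/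
/-!
Each chain `τ = (t_1, …, t_m)` contributes the function
`x ↦ δ^{-t_m} ρ_{t_m}'(x/e - c_{t_m}) + const`, which is affine and, since `ρ_{t_m} ≥ 0`, monotone;
`u` is their pointwise infimum, hence concave and monotone once it is finite.
Finiteness comes from the Afriat inequalities: telescoping them along the chain bounds its
constant part below by `u_{t_m} - u_{t_1}`, and on the orthant the affine part is at least its
value at `0`, so every chain value is bounded below by one of finitely many numbers.
-/

open Matrix

/-- The set of values, over all finite index sequences `τ = (t_1, ..., t_m)`, of
`δ^{-t_m} ρ_{t_m}'(x/e - c_{t_m}) + Σ_{i<m} δ^{-t_i} ρ_{t_i}'(c_{t_{i+1}}/e - c_{t_i})`. -/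
def edValues (L T : ℕ) (ρ c : Fin (T + 1) → Fin L → ℝ) (δ e : ℝ)
    (x : Fin L → ℝ) : Set ℝ :=
  {y | ∃ (m : ℕ) (τ : Fin (m + 1) → Fin (T + 1)),
    y = (δ ^ ((τ (Fin.last m)) : ℕ))⁻¹ *
          (ρ (τ (Fin.last m)) ⬝ᵥ (e⁻¹ • x - c (τ (Fin.last m)))) +
        ∑ i : Fin m, (δ ^ ((τ i.castSucc) : ℕ))⁻¹ *
          (ρ (τ i.castSucc) ⬝ᵥ (e⁻¹ • c (τ i.succ) - c (τ i.castSucc)))}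

theorem Fin.sum_succ_sub_castSucc {M : Type*} [AddCommGroup M] {m : ℕ} (g : Fin (m + 1) → M) :
    ∑ i : Fin m, (g i.succ - g i.castSucc) = g (Fin.last m) - g 0 := by
  rw [Finset.sum_sub_distrib, sub_eq_sub_iff_add_eq_add, add_comm, ← Fin.sum_univ_succ,
    Fin.sum_univ_castSucc, add_comm]

theorem ConcaveOn.ciInf {E ι : Type*} [AddCommMonoid E] [Module ℝ E] [Nonempty ι] {s : Set E}
    {f : ι → E → ℝ} (hs : Convex ℝ s) (hf : ∀ i, ConcaveOn ℝ s (f i))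
    (hbdd : ∀ x ∈ s, BddBelow (Set.range fun i => f i x)) :
    ConcaveOn ℝ s fun x => ⨅ i, f i x := by
  refine ⟨hs, fun x hx y hy a b ha hb hab => le_ciInf fun i => ?_⟩
  calc a • (⨅ i, f i x) + b • (⨅ i, f i y) ≤ a • f i x + b • f i y := by
        gcongr
        exacts [ciInf_le (hbdd x hx) i, ciInf_le (hbdd y hy) i]
    _ ≤ f i (a • x + b • y) := (hf i).2 hx hy ha hb hab

noncomputable section

namespace Afriat

variable {L T : ℕ} (ρ c : Fin (T + 1) → Fin L → ℝ) (δ e : ℝ)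

def afriatTerm (t : Fin (T + 1)) (y : Fin L → ℝ) : ℝ :=
  (δ ^ (t : ℕ))⁻¹ * (ρ t ⬝ᵥ (e⁻¹ • y - c t))

abbrev Chain (T : ℕ) : Type := Σ m : ℕ, Fin (m + 1) → Fin (T + 1)

def chainValue (τ : Chain T) (x : Fin L → ℝ) : ℝ :=
  afriatTerm ρ c δ e (τ.2 (Fin.last τ.1)) x +
    ∑ i : Fin τ.1, afriatTerm ρ c δ e (τ.2 i.castSucc) (c (τ.2 i.succ))

theorem edValues_eq_range (x : Fin L → ℝ) :
    edValues L T ρ c δ e x = Set.range fun τ : Chain T => chainValue ρ c δ e τ x := by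
  ext y
  simp only [edValues, Set.mem_range, Sigma.exists, chainValue, afriatTerm, eq_comm]
  rfl

theorem afriatTerm_add_smul {a b : ℝ} (hab : a + b = 1) (t : Fin (T + 1)) (x y : Fin L → ℝ) :
    afriatTerm ρ c δ e t (a • x + b • y) =
      a * afriatTerm ρ c δ e t x + b * afriatTerm ρ c δ e t y := by
  simp only [afriatTerm, smul_add, smul_comm e⁻¹, dotProduct_add, dotProduct_sub,
    dotProduct_smul, smul_eq_mul]
  linear_combination (δ ^ (t : ℕ))⁻¹ * (ρ t ⬝ᵥ c t) * hab

theorem concaveOn_afriatTerm (t : Fin (T + 1)) :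
    ConcaveOn ℝ Set.univ (afriatTerm ρ c δ e t) :=
  ⟨convex_univ, fun x _ y _ _ _ _ _ hab => (afriatTerm_add_smul ρ c δ e hab t x y).ge⟩

theorem concaveOn_chainValue (τ : Chain T) : ConcaveOn ℝ Set.univ (chainValue ρ c δ e τ) :=
  (concaveOn_afriatTerm ρ c δ e _).add_const _

variable {ρ c δ e}

theorem monotone_afriatTerm (hδ : 0 ≤ δ) (he : 0 ≤ e) {t : Fin (T + 1)} (hρ : 0 ≤ ρ t) :
    Monotone (afriatTerm ρ c δ e t) := fun x y hxy => by
  unfold afriatTerm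
  gcongr
  exact dotProduct_le_dotProduct_of_nonneg_left (by gcongr) hρ

theorem monotone_chainValue (hδ : 0 ≤ δ) (he : 0 ≤ e) (hρ : ∀ t, 0 ≤ ρ t) (τ : Chain T) :
    Monotone (chainValue ρ c δ e τ) := fun _ _ hxy =>
  add_le_add_left (monotone_afriatTerm hδ he (hρ _) hxy) _

theorem sub_le_sum_afriatTerm {u : Fin (T + 1) → ℝ}
    (hA : ∀ s t, u s ≤ u t + afriatTerm ρ c δ e t (c s)) {m : ℕ} (τ : Fin (m + 1) → Fin (T + 1)) :
    u (τ (Fin.last m)) - u (τ 0) ≤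
      ∑ i : Fin m, afriatTerm ρ c δ e (τ i.castSucc) (c (τ i.succ)) := by
  rw [← Fin.sum_succ_sub_castSucc fun i => u (τ i)]
  gcongr with i
  linarith [hA (τ i.succ) (τ i.castSucc)]

theorem bddBelow_range_chainValue (hδ : 0 ≤ δ) (he : 0 ≤ e) (hρ : ∀ t, 0 ≤ ρ t)
    {u : Fin (T + 1) → ℝ} (hA : ∀ s t, u s ≤ u t + afriatTerm ρ c δ e t (c s))
    {x : Fin L → ℝ} (hx : 0 ≤ x) :
    BddBelow (Set.range fun τ : Chain T => chainValue ρ c δ e τ x) := by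
  let bound : Fin (T + 1) × Fin (T + 1) → ℝ := fun p => u p.2 - u p.1 + afriatTerm ρ c δ e p.2 0
  obtain ⟨B, hB⟩ := (Set.finite_range bound).bddBelow
  refine ⟨B, ?_⟩
  rintro _ ⟨⟨m, τ⟩, rfl⟩
  calc B ≤ bound (τ 0, τ (Fin.last m)) := hB ⟨_, rfl⟩
    _ ≤ chainValue ρ c δ e ⟨m, τ⟩ x := by
      have hsum := sub_le_sum_afriatTerm hA τ
      have hlast := monotone_afriatTerm (c := c) hδ he (hρ (τ (Fin.last m))) hx
      simp only [bound, chainValue]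
      linarith

end Afriat

end

open Afriat in
theorem stmt_4_general (L T : ℕ) (ρ c : Fin (T + 1) → Fin L → ℝ) (δ e : ℝ)
    (hδ : 0 < δ) (he : 0 < e)
    (hρ : ∀ t i, 0 < ρ t i)
    (u0 : Fin (T + 1) → ℝ)
    (hA : ∀ s t : Fin (T + 1),
      u0 s ≤ u0 t + (δ ^ (t : ℕ))⁻¹ * (ρ t ⬝ᵥ (e⁻¹ • c s - c t))) :
    (∀ x : Fin L → ℝ, (∀ i, 0 ≤ x i) → BddBelow (edValues L T ρ c δ e x)) ∧
    ConcaveOn ℝ {x : Fin L → ℝ | ∀ i, 0 ≤ x i}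
      (fun x => sInf (edValues L T ρ c δ e x)) ∧
    (∀ x x' : Fin L → ℝ, (∀ i, 0 ≤ x i) → (∀ i, 0 ≤ x' i) → x ≤ x' →
      sInf (edValues L T ρ c δ e x) ≤ sInf (edValues L T ρ c δ e x')) := by
  have hρ₀ : ∀ t, 0 ≤ ρ t := fun t i => (hρ t i).le
  have hbdd : ∀ x : Fin L → ℝ, 0 ≤ x →
      BddBelow (Set.range fun τ : Chain T => chainValue ρ c δ e τ x) :=
    fun x hx => bddBelow_range_chainValue hδ.le he.le hρ₀ hA hx
  simp only [edValues_eq_range]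
  refine ⟨hbdd, ?_, fun x x' hx _ hxx' =>
    ciInf_mono (hbdd x hx) fun τ => monotone_chainValue hδ.le he.le hρ₀ τ hxx'⟩
  have horthant : Convex ℝ {x : Fin L → ℝ | ∀ i, 0 ≤ x i} := convex_Ici 0
  exact ConcaveOn.ciInf horthant (fun τ => (concaveOn_chainValue ρ c δ e τ).subset
    (Set.subset_univ _) horthant) hbdd

/-- The Afriat-style constructed function `u(x) = inf edValues x` is
finite (bounded below), concave, and monotone on the nonnegative orthant. -/
theorem stmt_4 (L T : ℕ) (ρ c : Fin (T + 1) → Fin L → ℝ) (δ e : ℝ)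
    (hδ : 0 < δ) (hδ1 : δ ≤ 1) (he : 0 < e) (he1 : e ≤ 1)
    (hρ : ∀ t i, 0 < ρ t i) (hc : ∀ t i, 0 ≤ c t i)
    (u0 : Fin (T + 1) → ℝ)
    (hA : ∀ s t : Fin (T + 1),
      u0 s ≤ u0 t + (δ ^ (t : ℕ))⁻¹ * (ρ t ⬝ᵥ (e⁻¹ • c s - c t))) :
    (∀ x : Fin L → ℝ, (∀ i, 0 ≤ x i) → BddBelow (edValues L T ρ c δ e x)) ∧
    ConcaveOn ℝ {x : Fin L → ℝ | ∀ i, 0 ≤ x i}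
      (fun x => sInf (edValues L T ρ c δ e x)) ∧
    (∀ x x' : Fin L → ℝ, (∀ i, 0 ≤ x i) → (∀ i, 0 ≤ x' i) → x ≤ x' →
      sInf (edValues L T ρ c δ e x) ≤ sInf (edValues L T ρ c δ e x')) :=
  stmt_4_general L T ρ c δ e hδ he hρ u0 hA
end

section
/- With the setting and the constructed function u of the previous statement, for every t ∈ {0,...,T} and every c ∈ ℝ₊^L, u(c_t) - δ^{-t} ρ_t' c_t ≥ u(c) - δ^{-t} ρ_t' c / e. That is, u together with δ e-ED rationalizes the data. -/
open Matrix

private lemma tele_sum : ∀ (m : ℕ) (f : Fin (m + 1) → ℝ),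
    ∑ i : Fin m, (f i.succ - f i.castSucc) = f (Fin.last m) - f 0 := by
  intro m
  induction m with
  | zero => intro f; simp
  | succ n ih =>
    intro f
    rw [Fin.sum_univ_castSucc]
    have h := ih (fun j => f j.castSucc)
    simp only [Fin.succ_castSucc]
    rw [h]
    simp [Fin.succ_last]

private lemma edValues_nonempty (L T : ℕ) (ρ c : Fin (T + 1) → Fin L → ℝ) (δ e : ℝ)
    (x : Fin L → ℝ) : (edValues L T ρ c δ e x).Nonempty := by
  refine ⟨_, 0, fun _ => 0, rfl⟩

private lemma dot_nonneg {L : ℕ} {v w : Fin L → ℝ} (hv : ∀ i, 0 ≤ v i)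
    (hw : ∀ i, 0 ≤ w i) : 0 ≤ v ⬝ᵥ w :=
  Finset.sum_nonneg fun i _ => mul_nonneg (hv i) (hw i)

private lemma edValues_bddBelow (L T : ℕ) (ρ c : Fin (T + 1) → Fin L → ℝ) (δ e : ℝ)
    (hδ : 0 < δ) (he : 0 < e)
    (hρ : ∀ t i, 0 < ρ t i) (hc : ∀ t i, 0 ≤ c t i)
    (u0 : Fin (T + 1) → ℝ)
    (hA : ∀ s t : Fin (T + 1),
      u0 s ≤ u0 t + (δ ^ (t : ℕ))⁻¹ * (ρ t ⬝ᵥ (e⁻¹ • c s - c t)))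
    (x : Fin L → ℝ) (hx : ∀ i, 0 ≤ x i) :
    BddBelow (edValues L T ρ c δ e x) := by
  have hne : (Finset.univ : Finset (Fin (T + 1))).Nonempty := Finset.univ_nonempty
  refine ⟨Finset.univ.inf' hne (fun s => u0 s - (δ ^ (s : ℕ))⁻¹ * (ρ s ⬝ᵥ c s))
    - Finset.univ.sup' hne u0, ?_⟩
  rintro y ⟨m, τ, rfl⟩
  -- bound the sum part using hA and telescoping
  have hsum : u0 (τ (Fin.last m)) - u0 (τ 0) ≤
      ∑ i : Fin m, (δ ^ ((τ i.castSucc) : ℕ))⁻¹ *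
        (ρ (τ i.castSucc) ⬝ᵥ (e⁻¹ • c (τ i.succ) - c (τ i.castSucc))) := by
    rw [← tele_sum m (fun j => u0 (τ j))]
    refine Finset.sum_le_sum fun i _ => ?_
    have := hA (τ i.succ) (τ i.castSucc)
    linarith
  -- bound the final part
  have hfin : - (δ ^ ((τ (Fin.last m)) : ℕ))⁻¹ * (ρ (τ (Fin.last m)) ⬝ᵥ c (τ (Fin.last m))) ≤
      (δ ^ ((τ (Fin.last m)) : ℕ))⁻¹ *
        (ρ (τ (Fin.last m)) ⬝ᵥ (e⁻¹ • x - c (τ (Fin.last m)))) := by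
    set s := τ (Fin.last m)
    have h1 : ρ s ⬝ᵥ (e⁻¹ • x - c s) = e⁻¹ * (ρ s ⬝ᵥ x) - ρ s ⬝ᵥ c s := by
      rw [dotProduct_sub, dotProduct_smul]; rfl
    have h2 : 0 ≤ ρ s ⬝ᵥ x := dot_nonneg (fun i => (hρ s i).le) hx
    have h3 : 0 ≤ (δ ^ (s : ℕ))⁻¹ := by positivity
    have h4 : - (ρ s ⬝ᵥ c s) ≤ ρ s ⬝ᵥ (e⁻¹ • x - c s) := by
      rw [h1]
      have : 0 ≤ e⁻¹ * (ρ s ⬝ᵥ x) := mul_nonneg (by positivity) h2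
      linarith
    calc - (δ ^ (s : ℕ))⁻¹ * (ρ s ⬝ᵥ c s) = (δ ^ (s : ℕ))⁻¹ * (-(ρ s ⬝ᵥ c s)) := by ring
    _ ≤ _ := mul_le_mul_of_nonneg_left h4 h3
  have hinf : Finset.univ.inf' hne (fun s => u0 s - (δ ^ (s : ℕ))⁻¹ * (ρ s ⬝ᵥ c s)) ≤
      u0 (τ (Fin.last m)) - (δ ^ ((τ (Fin.last m)) : ℕ))⁻¹ *
        (ρ (τ (Fin.last m)) ⬝ᵥ c (τ (Fin.last m))) :=
    Finset.inf'_le _ (Finset.mem_univ _)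
  have hsup : u0 (τ 0) ≤ Finset.univ.sup' hne u0 :=
    Finset.le_sup' _ (Finset.mem_univ _)
  linarith

private lemma edValues_append (L T : ℕ) (ρ c : Fin (T + 1) → Fin L → ℝ) (δ e : ℝ)
    (x : Fin L → ℝ) (t : Fin (T + 1)) {y : ℝ}
    (hy : y ∈ edValues L T ρ c δ e (c t)) :
    (δ ^ (t : ℕ))⁻¹ * (ρ t ⬝ᵥ (e⁻¹ • x - c t)) + y ∈ edValues L T ρ c δ e x := by
  obtain ⟨m, τ, rfl⟩ := hy
  refine ⟨m + 1, Fin.snoc τ t, ?_⟩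
  rw [Fin.sum_univ_castSucc]
  simp only [Fin.snoc_castSucc, Fin.succ_castSucc, Fin.succ_last, Fin.snoc_last]
  ring

/-- The constructed `u(x) = inf edValues x` e-ED rationalizes the data:
for each `t` and each `x` in the orthant,
`u(c_t) - δ^{-t} ρ_t'c_t ≥ u(x) - δ^{-t} ρ_t'x / e`. -/
theorem stmt_5 (L T : ℕ) (ρ c : Fin (T + 1) → Fin L → ℝ) (δ e : ℝ)
    (hδ : 0 < δ) (hδ1 : δ ≤ 1) (he : 0 < e) (he1 : e ≤ 1)
    (hρ : ∀ t i, 0 < ρ t i) (hc : ∀ t i, 0 ≤ c t i)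
    (u0 : Fin (T + 1) → ℝ)
    (hA : ∀ s t : Fin (T + 1),
      u0 s ≤ u0 t + (δ ^ (t : ℕ))⁻¹ * (ρ t ⬝ᵥ (e⁻¹ • c s - c t))) :
    ∀ (t : Fin (T + 1)) (x : Fin L → ℝ), (∀ i, 0 ≤ x i) →
      sInf (edValues L T ρ c δ e x) - (δ ^ (t : ℕ))⁻¹ * (ρ t ⬝ᵥ x) / e ≤
        sInf (edValues L T ρ c δ e (c t)) - (δ ^ (t : ℕ))⁻¹ * (ρ t ⬝ᵥ c t) := by
  intro t x hx
  have hbdd : BddBelow (edValues L T ρ c δ e x) :=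
    edValues_bddBelow L T ρ c δ e hδ he hρ hc u0 hA x hx
  have hC : (δ ^ (t : ℕ))⁻¹ * (ρ t ⬝ᵥ (e⁻¹ • x - c t)) =
      (δ ^ (t : ℕ))⁻¹ * (ρ t ⬝ᵥ x) / e - (δ ^ (t : ℕ))⁻¹ * (ρ t ⬝ᵥ c t) := by
    rw [dotProduct_sub, dotProduct_smul, smul_eq_mul]
    field_simp
  have key : ∀ y ∈ edValues L T ρ c δ e (c t),
      sInf (edValues L T ρ c δ e x) -
        ((δ ^ (t : ℕ))⁻¹ * (ρ t ⬝ᵥ x) / e - (δ ^ (t : ℕ))⁻¹ * (ρ t ⬝ᵥ c t)) ≤ y := by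
    intro y hy
    have hz := csInf_le hbdd (edValues_append L T ρ c δ e x t hy)
    rw [hC] at hz
    linarith
  have := le_csInf (edValues_nonempty L T ρ c δ e (c t)) key
  linarith
end

section
/- For a finite data set {(ρ_t, c_t)}_{t=0,...,T} and fixed δ ∈ (0,1], e ∈ (0,1], the following are equivalent: (a) there exists a concave, monotone function u : ℝ₊^L → ℝ such that u(c_t) - δ^{-t} ρ_t' c_t ≥ u(c) - δ^{-t} ρ_t' c / e for all t and all c ∈ ℝ₊^L; (b) there exist real numbers u_0,...,u_T such that u_s ≤ u_t + δ^{-t} ρ_t'(c_s/e - c_t) for all s,t ∈ {0,...,T}. -/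
open Matrix

/-- Proposition 1 (with δ fixed): e-ED rationalizability by a concave
monotone utility is equivalent to the finite system of Afriat-type inequalities. -/
theorem stmt_6 (L T : ℕ) (ρ c : Fin (T + 1) → Fin L → ℝ) (δ e : ℝ)
    (hδ : 0 < δ) (hδ1 : δ ≤ 1) (he : 0 < e) (he1 : e ≤ 1)
    (hρ : ∀ t i, 0 < ρ t i) (hc : ∀ t i, 0 ≤ c t i) :
    (∃ u : (Fin L → ℝ) → ℝ,
      ConcaveOn ℝ {x : Fin L → ℝ | ∀ i, 0 ≤ x i} u ∧
      (∀ x x' : Fin L → ℝ, (∀ i, 0 ≤ x i) → (∀ i, 0 ≤ x' i) → x ≤ x' → u x ≤ u x') ∧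
      (∀ (t : Fin (T + 1)) (x : Fin L → ℝ), (∀ i, 0 ≤ x i) →
        u x - (δ ^ (t : ℕ))⁻¹ * (ρ t ⬝ᵥ x) / e ≤
          u (c t) - (δ ^ (t : ℕ))⁻¹ * (ρ t ⬝ᵥ c t))) ↔
    (∃ u : Fin (T + 1) → ℝ, ∀ s t : Fin (T + 1),
      u s ≤ u t + (δ ^ (t : ℕ))⁻¹ * (ρ t ⬝ᵥ (e⁻¹ • c s - c t))) := by
  have he' : e ≠ 0 := ne_of_gt he
  constructor
  · rintro ⟨u, -, -, hopt⟩
    refine ⟨fun t => u (c t), fun s t => ?_⟩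
    have h := hopt t (c s) (hc s)
    have hdot : ρ t ⬝ᵥ (e⁻¹ • c s - c t) = e⁻¹ * (ρ t ⬝ᵥ c s) - ρ t ⬝ᵥ c t := by
      simp [dotProduct_sub, dotProduct_smul, smul_eq_mul]
    rw [hdot]
    have h2 : (δ ^ (t : ℕ))⁻¹ * (ρ t ⬝ᵥ c s) / e
        = (δ ^ (t : ℕ))⁻¹ * (e⁻¹ * (ρ t ⬝ᵥ c s)) := by
      field_simp
    rw [h2] at h
    linarith [h]
  · rintro ⟨u, hu⟩
    set f : Fin (T + 1) → (Fin L → ℝ) → ℝ :=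
      fun t x => u t + (δ ^ (t : ℕ))⁻¹ * (ρ t ⬝ᵥ (e⁻¹ • x - c t)) with hf
    set U : (Fin L → ℝ) → ℝ :=
      fun x => Finset.univ.inf' Finset.univ_nonempty (fun t => f t x) with hU
    have hUle : ∀ t x, U x ≤ f t x := fun t x =>
      Finset.inf'_le _ (Finset.mem_univ t)
    have hleU : ∀ x (r : ℝ), (∀ t, r ≤ f t x) → r ≤ U x := fun x r h =>
      Finset.le_inf' _ _ (fun t _ => h t)
    -- affinity of each f t
    have haff : ∀ (t : Fin (T + 1)) (a b : ℝ) (x y : Fin L → ℝ), a + b = 1 →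
        f t (a • x + b • y) = a * f t x + b * f t y := by
      intro t a b x y hab
      have hvec : e⁻¹ • (a • x + b • y) - c t
          = a • (e⁻¹ • x - c t) + b • (e⁻¹ • y - c t) := by
        have hct : c t = a • c t + b • c t := by rw [← add_smul, hab, one_smul]
        rw [smul_add]
        nth_rewrite 1 [hct]
        module
      simp only [hf]
      rw [hvec, dotProduct_add, dotProduct_smul, dotProduct_smul, smul_eq_mul,
        smul_eq_mul]
      linear_combination (u t) * hab.symm
    have hconc : ConcaveOn ℝ {x : Fin L → ℝ | ∀ i, 0 ≤ x i} U := by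
      constructor
      · intro x hx y hy a b ha hb hab i
        have := hx i; have := hy i
        simp only [Pi.add_apply, Pi.smul_apply, smul_eq_mul]
        have : 0 ≤ a * x i := mul_nonneg ha (hx i)
        have : 0 ≤ b * y i := mul_nonneg hb (hy i)
        linarith
      · intro x hx y hy a b ha hb hab
        simp only [smul_eq_mul]
        apply hleU
        intro t
        rw [haff t a b x y hab]
        have h1 : a * U x ≤ a * f t x := mul_le_mul_of_nonneg_left (hUle t x) ha
        have h2 : b * U y ≤ b * f t y := mul_le_mul_of_nonneg_left (hUle t y) hb
        linarith
    refine ⟨U, hconc, ?_, ?_⟩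
    · -- monotonicity
      intro x x' hx hx' hle
      apply hleU
      intro t
      refine le_trans (hUle t x) ?_
      simp only [hf]
      have hdle : ρ t ⬝ᵥ (e⁻¹ • x - c t) ≤ ρ t ⬝ᵥ (e⁻¹ • x' - c t) := by
        unfold dotProduct
        apply Finset.sum_le_sum
        intro i _
        have h1 : e⁻¹ * x i ≤ e⁻¹ * x' i :=
          mul_le_mul_of_nonneg_left (hle i) (le_of_lt (inv_pos.mpr he))
        have := (hρ t i).le
        simp only [Pi.sub_apply, Pi.smul_apply, smul_eq_mul]
        apply mul_le_mul_of_nonneg_left _ this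
        linarith
      have hA : 0 ≤ (δ ^ (t : ℕ))⁻¹ :=
        le_of_lt (inv_pos.mpr (pow_pos hδ _))
      have := mul_le_mul_of_nonneg_left hdle hA
      linarith
    · -- optimality
      intro t x hx
      have h1 : U x ≤ f t x := hUle t x
      have h2 : u t ≤ U (c t) := by
        apply hleU
        intro s
        exact hu t s
      have h3 : f t x = u t + (δ ^ (t : ℕ))⁻¹ * (ρ t ⬝ᵥ x) / e
          - (δ ^ (t : ℕ))⁻¹ * (ρ t ⬝ᵥ c t) := by
        simp only [hf]
        rw [dotProduct_sub, dotProduct_smul, smul_eq_mul]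
        field_simp
        ring
      rw [h3] at h1
      linarith
end

section
/- Let u : ℝ₊^L → ℝ be concave, δ ∈ (0,1], and suppose for every t ∈ {0,...,T} the bundle c_t maximizes c ↦ u(c) + δ^{-t}(y_t - ρ_t'c) over ℝ₊^L. Then the stream (c_0,...,c_T) maximizes Σ_{t=0}^T δ^t u(x_t) over all streams (x_0,...,x_T) in (ℝ₊^L)^{T+1} satisfying the aggregate budget constraint Σ_{t=0}^T ρ_t' x_t ≤ Σ_{t=0}^T ρ_t' c_t. -/
open Matrix

/-- Per-period maximization of the augmented utility
`u(x) + δ^{-t}(y_t - ρ_t'x)` implies that the observed stream maximizes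
`Σ δ^t u(x_t)` subject to the aggregate lifetime budget constraint. -/
theorem stmt_10 (L T : ℕ) (u : (Fin L → ℝ) → ℝ)
    (hconc : ConcaveOn ℝ {x : Fin L → ℝ | ∀ i, 0 ≤ x i} u)
    (δ : ℝ) (hδ : 0 < δ) (hδ1 : δ ≤ 1)
    (ρ c : Fin (T + 1) → Fin L → ℝ) (y : Fin (T + 1) → ℝ)
    (hρ : ∀ t i, 0 < ρ t i) (hc : ∀ t i, 0 ≤ c t i)
    (hmax : ∀ (t : Fin (T + 1)) (x : Fin L → ℝ), (∀ i, 0 ≤ x i) →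
      u x + (δ ^ (t : ℕ))⁻¹ * (y t - ρ t ⬝ᵥ x) ≤
        u (c t) + (δ ^ (t : ℕ))⁻¹ * (y t - ρ t ⬝ᵥ c t)) :
    ∀ x : Fin (T + 1) → Fin L → ℝ, (∀ t i, 0 ≤ x t i) →
      (∑ t : Fin (T + 1), ρ t ⬝ᵥ x t) ≤ (∑ t : Fin (T + 1), ρ t ⬝ᵥ c t) →
      (∑ t : Fin (T + 1), δ ^ (t : ℕ) * u (x t)) ≤
        (∑ t : Fin (T + 1), δ ^ (t : ℕ) * u (c t)) := by
  intro x hx hbudget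
  have key : ∀ t : Fin (T + 1),
      δ ^ (t : ℕ) * u (x t) ≤ δ ^ (t : ℕ) * u (c t) + (ρ t ⬝ᵥ x t - ρ t ⬝ᵥ c t) := by
    intro t
    have hpow : (0 : ℝ) < δ ^ (t : ℕ) := pow_pos hδ _
    have h := hmax t (x t) (hx t)
    have h' : u (x t) - u (c t) ≤ (δ ^ (t : ℕ))⁻¹ * (ρ t ⬝ᵥ x t - ρ t ⬝ᵥ c t) := by
      ring_nf at h ⊢
      linarith
    have h2 := mul_le_mul_of_nonneg_left h' (le_of_lt hpow)
    rw [mul_inv_cancel_left₀ (ne_of_gt hpow)] at h2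
    nlinarith
  calc (∑ t : Fin (T + 1), δ ^ (t : ℕ) * u (x t))
      ≤ ∑ t : Fin (T + 1), (δ ^ (t : ℕ) * u (c t) + (ρ t ⬝ᵥ x t - ρ t ⬝ᵥ c t)) :=
        Finset.sum_le_sum fun t _ => key t
    _ = (∑ t : Fin (T + 1), δ ^ (t : ℕ) * u (c t))
        + ((∑ t : Fin (T + 1), ρ t ⬝ᵥ x t) - ∑ t : Fin (T + 1), ρ t ⬝ᵥ c t) := by
        rw [Finset.sum_add_distrib, Finset.sum_sub_distrib]
    _ ≤ ∑ t : Fin (T + 1), δ ^ (t : ℕ) * u (c t) := by linarith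
end
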